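/- Let G be a graph and t ≥ 2 an integer, and let P_t be the path graph on t vertices. If v is a leaf of P_t, then γ_I(G∘_v P_t) = n(G)·⌈(t+1)/2⌉ when t is odd, and γ_I(G∘_v P_t) = n(G)·⌈t/2⌉ + γ(G) when t is even. Furthermore, if v is a non-leaf vertex of P_t, then γ_I(G∘_v P_t) = n(G)·⌈(t+1)/2⌉. -/

import Mathlib

open Finset

open scoped Classical

/-- An Italian dominating function on a finite simple graph: values in {0,1,2} and
every vertex with value 0 has neighbour values summing to at least 2. -/
noncomputable def IsIDF {α : Type*} [Fintype α] (G : SimpleGraph α) (f : α → ℕ) : Prop :=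
  (∀ u, f u ≤ 2) ∧
    ∀ u, f u = 0 → 2 ≤ ∑ w ∈ Finset.univ.filter (fun w => G.Adj u w), f w

/-- The Italian domination number γ_I(G). -/
noncomputable def italianNumber {α : Type*} [Fintype α] (G : SimpleGraph α) : ℕ :=
  sInf {n | ∃ f : α → ℕ, IsIDF G f ∧ ∑ u, f u = n}

/-- A γ_I(G)-function: an IDF on G of minimum weight. -/
noncomputable def IsMinIDF {α : Type*} [Fintype α] (G : SimpleGraph α) (f : α → ℕ) : Prop :=
  IsIDF G f ∧ ∑ u, f u = italianNumber G

/-- D is a dominating set of G. -/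
def IsDomSet {α : Type*} (G : SimpleGraph α) (D : Set α) : Prop :=
  ∀ u ∉ D, ∃ w ∈ D, G.Adj u w

/-- The domination number γ(G). -/
noncomputable def dominationNumber {α : Type*} [Fintype α] (G : SimpleGraph α) : ℕ :=
  sInf {n | ∃ D : Finset α, IsDomSet G ↑D ∧ D.card = n}

/-- The degree of a vertex. -/
noncomputable def deg {α : Type*} [Fintype α] (G : SimpleGraph α) (u : α) : ℕ :=
  (Finset.univ.filter (fun w => G.Adj u w)).card

/-- The rooted product G∘_v H: one copy of H for each vertex of G, the root v of the
x-th copy being identified with the vertex x of G. The pair (x, y) is the vertex y of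
the x-th copy of H; in particular (x, v) is the vertex x of G. -/
def rootedProd {α β : Type*} (G : SimpleGraph α) (H : SimpleGraph β) (v : β) :
    SimpleGraph (α × β) where
  Adj p q := (p.1 = q.1 ∧ H.Adj p.2 q.2) ∨ (p.2 = v ∧ q.2 = v ∧ G.Adj p.1 q.1)
  symm := by
    constructor
    rintro ⟨x, y⟩ ⟨x', y'⟩ (⟨h1, h2⟩ | ⟨h1, h2, h3⟩)
    · exact Or.inl ⟨h1.symm, h2.symm⟩
    · exact Or.inr ⟨h2, h1, h3.symm⟩
  loopless := by
    constructor
    rintro ⟨x, y⟩ (⟨_, h⟩ | ⟨_, _, h⟩)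
    · exact H.loopless.irrefl _ h
    · exact G.loopless.irrefl _ h

/-- The weight ω(f_x) of the restriction of f to the copy H_x. -/
def copyWeight {α β : Type*} [Fintype β] (f : α × β → ℕ) (x : α) : ℕ :=
  ∑ y, f (x, y)

/-- The graph H − {v} obtained from H by deleting the vertex v. -/
def deleteVertex {β : Type*} (H : SimpleGraph β) (v : β) : SimpleGraph {w : β // w ≠ v} :=
  SimpleGraph.induce {w : β | w ≠ v} H

/-!
Read an Italian dominating function `f` of `G ∘_v P_t` on the copy of `P_t` at `x` as a sequence
`a₀, …, a_{t-1}`. Every vertex but the root satisfies the Italian condition inside its path, and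
by induction along a path, a segment of length `m` whose conditions hold except at its end `e` has
weight at least `(m + a_e) / 2`. For a leaf root this gives every copy weight `≥ t / 2`, and
`≥ (t + 1) / 2` for odd `t`; for a non-leaf root `v`, cutting the path at `v` into two such
segments that share `v` gives `≥ (t + 1) / 2`. For even `t` and a leaf root, a copy of weight only
`t / 2` has root value `0` and gets at most `1` from its path, so its root has a `G`-neighbour of
positive value, whose copy then weighs `t / 2 + 1`: the heavy copies dominate `G`. The matching
upper bounds are alternating patterns along the paths, with one extra `1` on each copy indexed by
a minimum dominating set in the even case. Reversing `P_t` reduces every leaf root to `0`.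
-/

/-- The Italian condition at `j` for weights `a` along a path. At `j = 0` the truncated
`j - 1 = 0` makes the left term `a 0`, which vanishes whenever the condition applies. -/
def ItalianAt (a : ℕ → ℕ) (j : ℕ) : Prop :=
  a j = 0 → 2 ≤ a (j - 1) + a (j + 1)

section PathSequences

variable {a : ℕ → ℕ} {m : ℕ}

theorem add_last_le_two_mul_sum_of_italianAt (hm : 2 ≤ m)
    (ha : ∀ j, j + 1 < m → ItalianAt a j) : m + a (m - 1) ≤ 2 * ∑ j ∈ range m, a j := by
  induction m using Nat.strong_induction_on with
  | _ m ih =>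
  rcases (by omega : m = 2 ∨ 3 ≤ m) with rfl | hm3
  · have h0 : a 0 = 0 → 2 ≤ a 0 + a 1 := ha 0 (by omega)
    show 2 + a 1 ≤ 2 * ∑ j ∈ range 2, a j
    rw [sum_range_succ, sum_range_one]
    omega
  · -- if `a (m - 2) = a (m - 1) = 0`, the condition at `m - 2` puts weight 2 on `m - 3`
    have h1 := ih (m - 1) (by omega) (by omega) fun j hj => ha j (by omega)
    have h2 : 4 ≤ m → m - 2 + a (m - 2 - 1) ≤ 2 * ∑ j ∈ range (m - 2), a j := fun hm4 =>
      ih (m - 2) (by omega) (by omega) fun j hj => ha j (by omega)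
    have h3 := ha (m - 2) (by omega)
    have hS1 := sum_range_succ a (m - 1)
    have hS2 := sum_range_succ a (m - 2)
    have hS3 := sum_range_succ a (m - 3)
    simp only [ItalianAt, show m - 1 + 1 = m by omega, show m - 2 + 1 = m - 1 by omega,
      show m - 3 + 1 = m - 2 by omega, show m - 1 - 1 = m - 2 by omega,
      show m - 2 - 1 = m - 3 by omega] at h1 h2 h3 hS1 hS2 hS3
    omega

theorem add_first_le_two_mul_sum_of_italianAt (hm : 2 ≤ m)
    (ha : ∀ j, 0 < j → j < m → ItalianAt a j) (ham : a m = 0) :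
    m + a 0 ≤ 2 * ∑ j ∈ range m, a j := by
  have h := add_last_le_two_mul_sum_of_italianAt (a := fun j => a (m - 1 - j)) hm
    fun j hj h0 => by
      rcases Nat.eq_zero_or_pos j with rfl | hj0
      · have := ha (m - 1) (by omega) (by omega) h0
        simp only [show m - 1 + 1 = m by omega, ham] at this
        simp only [Nat.zero_sub, Nat.sub_zero, zero_add]
        omega
      · have := ha (m - 1 - j) (by omega) (by omega) h0
        simp only [show m - 1 - (j - 1) = m - 1 - j + 1 by omega,
          show m - 1 - (j + 1) = m - 1 - j - 1 by omega]
        omega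
  simpa [sum_range_reflect a m] using h

theorem succ_le_two_mul_sum_of_italianAt (hm : 2 ≤ m) (ha : ∀ j < m, ItalianAt a j)
    (ham : a m = 0) : m + 1 ≤ 2 * ∑ j ∈ range m, a j := by
  have h1 := add_last_le_two_mul_sum_of_italianAt hm fun j hj => ha j (by omega)
  have h2 : 3 ≤ m → m - 1 + a (m - 1 - 1) ≤ 2 * ∑ j ∈ range (m - 1), a j := fun hm3 =>
    add_last_le_two_mul_sum_of_italianAt (by omega) fun j hj => ha j (by omega)
  have h3 := ha (m - 1) (by omega)
  have hS1 := sum_range_succ a (m - 1)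
  have hS2 := sum_range_succ a (m - 2)
  simp only [ItalianAt, show m - 1 + 1 = m by omega, show m - 2 + 1 = m - 1 by omega,
    show m - 1 - 1 = m - 2 by omega, ham] at h2 h3 hS1 hS2
  omega

theorem succ_le_two_mul_sum_of_italianAt_of_ne {v : ℕ} (hv0 : 0 < v) (hvm : v + 1 < m)
    (ha : ∀ j < m, j ≠ v → ItalianAt a j) (ham : a m = 0) :
    m + 1 ≤ 2 * ∑ j ∈ range m, a j := by
  -- the two halves `[0, v]` and `[v, m)` of the path both contain `v`
  have hL := add_last_le_two_mul_sum_of_italianAt (m := v + 1) (by omega)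
    fun j hj => ha j (by omega) (by omega)
  have hR := add_first_le_two_mul_sum_of_italianAt (a := fun j => a (v + j)) (m := m - v)
    (by omega) (fun j hj0 hj h0 => by
      have := ha (v + j) (by omega) (by omega) h0
      simp only [show v + (j - 1) = v + j - 1 by omega, ← add_assoc]
      exact this) (by simpa [show v + (m - v) = m by omega] using ham)
  have hsplit := sum_range_add a v (m - v)
  rw [show v + (m - v) = m by omega] at hsplit
  simp only [sum_range_succ, Nat.add_sub_cancel, add_zero] at hL hR
  omega

end PathSequences

theorem sum_range_ite_mod_two_eq_zero (n : ℕ) :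
    ∑ j ∈ range n, (if j % 2 = 0 then 1 else 0) = (n + 1) / 2 := by
  induction n with
  | zero => rfl
  | succ n ih => rw [sum_range_succ, ih]; split_ifs <;> omega

theorem sum_range_mod_two (n : ℕ) : ∑ j ∈ range n, j % 2 = n / 2 := by
  induction n with
  | zero => rfl
  | succ n ih => rw [sum_range_succ, ih]; omega

def altPattern (t j : ℕ) : ℕ :=
  if j % 2 = 0 ∨ j + 1 = t then 1 else 0

theorem sum_range_altPattern {t : ℕ} (ht : 1 ≤ t) :
    ∑ j ∈ range t, altPattern t j = (t + 2) / 2 := by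
  obtain ⟨n, rfl⟩ := Nat.exists_eq_add_of_le' ht
  have hlt : ∀ j ∈ range n, altPattern (n + 1) j = if j % 2 = 0 then 1 else 0 := fun j hj =>
    if_congr (or_iff_left (by have := mem_range.1 hj; omega)) rfl rfl
  rw [sum_range_succ, sum_congr rfl hlt, sum_range_ite_mod_two_eq_zero, altPattern,
    if_pos (Or.inr rfl)]
  omega

theorem sum_add_ite_mem {α : Type*} [Fintype α] (D : Finset α) (c : ℕ) :
    ∑ x, (c + if x ∈ D then 1 else 0) = Fintype.card α * c + #D := by
  rw [sum_add_distrib, sum_const, card_univ, smul_eq_mul, sum_ite_mem, univ_inter,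
    sum_const, smul_eq_mul, mul_one]

section ItalianNumber

variable {β γ : Type*} [Fintype β] [Fintype γ] {H : SimpleGraph β}

theorem italianNumber_le {f : β → ℕ} (hf : IsIDF H f) : italianNumber H ≤ ∑ u, f u :=
  Nat.sInf_le ⟨f, hf, rfl⟩

theorem le_italianNumber {N : ℕ} (h : ∀ f, IsIDF H f → N ≤ ∑ u, f u) : N ≤ italianNumber H :=
  le_csInf ⟨_, fun _ => 2, ⟨fun _ => le_rfl, fun _ h => absurd h two_ne_zero⟩, rfl⟩
    (by rintro _ ⟨f, hf, rfl⟩; exact h f hf)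

theorem IsIDF.comp_iso {K : SimpleGraph γ} (e : H ≃g K) {f : γ → ℕ} (hf : IsIDF K f) :
    IsIDF H (f ∘ e) := by
  refine ⟨fun u => hf.1 (e u), fun u hu => ?_⟩
  have h := hf.2 (e u) hu
  rw [sum_filter, ← e.toEquiv.sum_comp] at h
  simpa [sum_filter, e.map_adj_iff] using h

theorem italianNumber_congr {K : SimpleGraph γ} (e : H ≃g K) :
    italianNumber H = italianNumber K := by
  unfold italianNumber
  congr 1
  ext n
  constructor
  · rintro ⟨f, hf, rfl⟩
    exact ⟨f ∘ e.symm, hf.comp_iso e.symm, e.symm.toEquiv.sum_comp f⟩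
  · rintro ⟨f, hf, rfl⟩
    exact ⟨f ∘ e, hf.comp_iso e, e.toEquiv.sum_comp f⟩

theorem card_mul_le_italianNumber {α : Type*} [Fintype α] {H : SimpleGraph (α × β)} {c : ℕ}
    (h : ∀ f, IsIDF H f → ∀ x, c ≤ copyWeight f x) : Fintype.card α * c ≤ italianNumber H :=
  le_italianNumber fun f hf => by
    rw [Fintype.sum_prod_type, ← smul_eq_mul, ← card_univ, ← sum_const]
    exact sum_le_sum fun x _ => h f hf x

end ItalianNumber

section Domination

variable {α : Type*} [Fintype α] (G : SimpleGraph α)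

theorem dominationNumber_le {D : Finset α} (hD : IsDomSet G D) : dominationNumber G ≤ #D :=
  Nat.sInf_le ⟨D, hD, rfl⟩

theorem exists_isDomSet_card_eq : ∃ D : Finset α, IsDomSet G D ∧ #D = dominationNumber G := by
  have h : {n | ∃ D : Finset α, IsDomSet G D ∧ #D = n}.Nonempty :=
    ⟨_, univ, fun u hu => (hu (mem_coe.2 (mem_univ u))).elim, rfl⟩
  exact Nat.sInf_mem h

end Domination

section RootedProduct

variable {α β γ : Type*} (G : SimpleGraph α)

def rootedProdCongr {H : SimpleGraph β} {K : SimpleGraph γ} (φ : H ≃g K) (v : β) :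
    rootedProd G H v ≃g rootedProd G K (φ v) where
  toEquiv := (Equiv.refl α).prodCongr φ.toEquiv
  map_rel_iff' := by
    rintro ⟨x, y⟩ ⟨x', y'⟩
    simp [rootedProd, φ.map_adj_iff]

variable [Fintype α] [Fintype β]

theorem sum_rootedProd_adj [DecidableEq β] (H : SimpleGraph β) (v : β) (f : α × β → ℕ) (x : α)
    (j : β) :
    ∑ w ∈ univ.filter (fun w => (rootedProd G H v).Adj (x, j) w), f w =
      ∑ k ∈ univ.filter (fun k => H.Adj j k), f (x, k) +
        if j = v then ∑ y ∈ univ.filter (fun y => G.Adj x y), f (y, v) else 0 := by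
  rw [sum_filter, Fintype.sum_prod_type]
  simp only [rootedProd]
  split_ifs with hj
  · subst hj
    simp only [true_and]
    calc
      _ = ∑ y, ∑ k, ((if x = y ∧ H.Adj j k then f (y, k) else 0) +
            if k = j ∧ G.Adj x y then f (y, k) else 0) := by
        refine sum_congr rfl fun y _ => sum_congr rfl fun k _ => ?_
        by_cases h₁ : x = y ∧ H.Adj j k
        · have h₂ : ¬(k = j ∧ G.Adj x y) := fun h => H.loopless.irrefl j (h.1 ▸ h₁.2)
          rw [if_pos (Or.inl h₁), if_pos h₁, if_neg h₂, add_zero]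
        · by_cases h₂ : k = j ∧ G.Adj x y
          · rw [if_pos (Or.inr h₂), if_neg h₁, if_pos h₂, zero_add]
          · rw [if_neg (by tauto), if_neg h₁, if_neg h₂, add_zero]
      _ = _ := by simp [sum_add_distrib, ite_and, sum_filter]
  · simp [hj, ite_and, sum_filter]

end RootedProduct

section PathGraph

open SimpleGraph

variable {t : ℕ}

def pathGraphRevIso (t : ℕ) : pathGraph t ≃g pathGraph t where
  toEquiv := Fin.revPerm
  map_rel_iff' := by
    intro u w
    simp only [Fin.revPerm_apply, pathGraph_adj, Fin.val_rev]
    omega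

def extendByZero (b : Fin t → ℕ) (n : ℕ) : ℕ :=
  if h : n < t then b ⟨n, h⟩ else 0

@[simp]
theorem extendByZero_val (b : Fin t → ℕ) (k : Fin t) : extendByZero b k = b k :=
  dif_pos k.2

theorem extendByZero_of_le (b : Fin t → ℕ) {n : ℕ} (hn : t ≤ n) : extendByZero b n = 0 :=
  dif_neg (by omega)

theorem sum_range_extendByZero (b : Fin t → ℕ) : ∑ j ∈ range t, extendByZero b j = ∑ k, b k := by
  rw [← Fin.sum_univ_eq_sum_range]
  simp

theorem sum_ite_val_eq_extendByZero (b : Fin t → ℕ) (n : ℕ) :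
    ∑ k, (if k.1 = n then b k else 0) = extendByZero b n := by
  unfold extendByZero
  split_ifs with hn
  · simp [← Fin.ext_iff (b := ⟨n, hn⟩)]
  · exact sum_eq_zero fun k _ => if_neg (by omega)

theorem sum_pathGraph_adj (b : Fin t → ℕ) (j : Fin t) :
    ∑ k ∈ univ.filter (fun k => (pathGraph t).Adj j k), b k =
      (if j.1 = 0 then 0 else extendByZero b (j - 1)) + extendByZero b (j + 1) := by
  calc
    _ = ∑ k, ((if k.1 = j.1 - 1 ∧ j.1 ≠ 0 then b k else 0) +
          if k.1 = j.1 + 1 then b k else 0) := by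
      rw [sum_filter]
      refine sum_congr rfl fun k _ => ?_
      rw [pathGraph_adj]
      split_ifs <;> omega
    _ = _ := by
      rw [sum_add_distrib, sum_ite_val_eq_extendByZero]
      split_ifs with h0
      · simp [h0]
      · simp [h0, sum_ite_val_eq_extendByZero]

theorem sum_pathGraph_adj_of_eq_zero (b : Fin t → ℕ) (j : Fin t) (hj : b j = 0) :
    ∑ k ∈ univ.filter (fun k => (pathGraph t).Adj j k), b k =
      extendByZero b (j - 1) + extendByZero b (j + 1) := by
  rw [sum_pathGraph_adj]
  split_ifs with h0
  · have h := (extendByZero_val b j).trans hj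
    rw [h0] at h
    simp [h0, h]
  · rfl

theorem deg_pathGraph_eq_one_iff (ht : 2 ≤ t) (v : Fin t) :
    deg (pathGraph t) v = 1 ↔ v.1 = 0 ∨ v.1 = t - 1 := by
  rw [deg, card_eq_sum_ones, sum_pathGraph_adj]
  simp only [extendByZero]
  split_ifs <;> omega

theorem copyWeight_eq_sum_range {α : Type*} (f : α × Fin t → ℕ) (x : α) :
    copyWeight f x = ∑ j ∈ range t, extendByZero (fun k => f (x, k)) j :=
  (sum_range_extendByZero _).symm

end PathGraph

section RootedPath

open SimpleGraph

variable {α : Type*} [Fintype α] {G : SimpleGraph α} {t : ℕ} {v : Fin t} {f : α × Fin t → ℕ}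

theorem isIDF_rootedProd_pathGraph_iff :
    IsIDF (rootedProd G (pathGraph t) v) f ↔ (∀ u, f u ≤ 2) ∧
      ∀ x (j : Fin t), f (x, j) = 0 →
        2 ≤ extendByZero (fun k => f (x, k)) (j - 1) + extendByZero (fun k => f (x, k)) (j + 1) +
          if j = v then ∑ y ∈ univ.filter (fun y => G.Adj x y), f (y, v) else 0 := by
  refine and_congr Iff.rfl ⟨fun h x j h0 => ?_, fun h ⟨x, j⟩ h0 => ?_⟩
  · have := h (x, j) h0
    rwa [sum_rootedProd_adj, sum_pathGraph_adj_of_eq_zero (fun k => f (x, k)) j h0] at this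
  · rw [sum_rootedProd_adj, sum_pathGraph_adj_of_eq_zero (fun k => f (x, k)) j h0]
    exact h x j h0

theorem IsIDF.italianAt_copy (hf : IsIDF (rootedProd G (pathGraph t) v) f) (x : α) {j : ℕ}
    (hj : j < t) (hjv : j ≠ v.1) : ItalianAt (extendByZero (fun k => f (x, k))) j := by
  intro h0
  rw [extendByZero, dif_pos hj] at h0
  have h := (isIDF_rootedProd_pathGraph_iff.1 hf).2 x ⟨j, hj⟩ h0
  rwa [if_neg fun h => hjv (congrArg Fin.val h), add_zero] at h

theorem IsIDF.add_le_two_mul_copyWeight (hf : IsIDF (rootedProd G (pathGraph t) v) f)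
    (ht : 2 ≤ t) (hv : v.1 = 0) (x : α) : t + f (x, v) ≤ 2 * copyWeight f x := by
  have h := add_first_le_two_mul_sum_of_italianAt ht
    (fun j hj0 hj => hf.italianAt_copy x hj (by omega)) (extendByZero_of_le _ le_rfl)
  rwa [← hv, extendByZero_val, ← copyWeight_eq_sum_range] at h

theorem IsIDF.succ_le_two_mul_copyWeight (hf : IsIDF (rootedProd G (pathGraph t) v) f)
    (hv0 : 0 < v.1) (hv : v.1 + 1 < t) (x : α) : t + 1 ≤ 2 * copyWeight f x := by
  rw [copyWeight_eq_sum_range]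
  exact succ_le_two_mul_sum_of_italianAt_of_ne hv0 hv (fun j hj hjv => hf.italianAt_copy x hj hjv)
    (extendByZero_of_le _ le_rfl)

theorem IsIDF.exists_adj_of_two_mul_copyWeight_le (hf : IsIDF (rootedProd G (pathGraph t) v) f)
    (ht : 2 ≤ t) (hv : v.1 = 0) {x : α} (hx : 2 * copyWeight f x ≤ t) :
    ∃ y, G.Adj x y ∧ f (y, v) ≠ 0 := by
  have hxv : f (x, v) = 0 := by
    have := hf.add_le_two_mul_copyWeight ht hv x
    omega
  have ha0 : extendByZero (fun k => f (x, k)) 0 = 0 := by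
    have := extendByZero_val (fun k => f (x, k)) v
    rwa [hv, hxv] at this
  have ha1 : extendByZero (fun k => f (x, k)) 1 ≤ 1 := by
    by_contra h
    have := succ_le_two_mul_sum_of_italianAt (a := extendByZero fun k => f (x, k)) ht
      (fun j hj => ?_) (extendByZero_of_le _ le_rfl)
    · rw [← copyWeight_eq_sum_range] at this
      omega
    · rcases Nat.eq_zero_or_pos j with rfl | hj0
      · intro _
        simp only [Nat.zero_sub, zero_add]
        omega
      · exact hf.italianAt_copy x hj (by omega)
  have hroot := (isIDF_rootedProd_pathGraph_iff.1 hf).2 x v hxv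
  rw [if_pos rfl, hv, Nat.zero_sub, zero_add] at hroot
  obtain ⟨y, hy, hne⟩ := exists_ne_zero_of_sum_ne_zero (by omega :
    ∑ y ∈ univ.filter (fun y => G.Adj x y), f (y, v) ≠ 0)
  exact ⟨y, (mem_filter.1 hy).2, hne⟩

end RootedPath

noncomputable def domPattern {α : Type*} (D : Finset α) (t : ℕ) (u : α × Fin t) : ℕ :=
  if u.1 ∈ D then altPattern t u.2 else u.2 % 2

theorem copyWeight_domPattern {α : Type*} (D : Finset α) {t : ℕ} (ht : 2 ≤ t) (he : Even t)
    (x : α) :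
    copyWeight (domPattern D t) x = t / 2 + if x ∈ D then 1 else 0 := by
  obtain ⟨k, rfl⟩ := he
  by_cases hx : x ∈ D
  · simp only [copyWeight, domPattern, hx, if_true, Fin.sum_univ_eq_sum_range (altPattern (k + k)),
      sum_range_altPattern (by omega : 1 ≤ k + k)]
    omega
  · simp only [copyWeight, domPattern, hx, if_false, Fin.sum_univ_eq_sum_range (· % 2),
      sum_range_mod_two, add_zero]

section Bounds

open SimpleGraph

variable {α : Type*} [Fintype α] (G : SimpleGraph α) {t : ℕ}

theorem italianNumber_rootedProd_pathGraph_le (ht : 1 ≤ t) (v : Fin t) :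
    italianNumber (rootedProd G (pathGraph t) v) ≤ Fintype.card α * ((t + 2) / 2) := by
  let g : α × Fin t → ℕ := fun u => altPattern t u.2
  have hg : IsIDF (rootedProd G (pathGraph t) v) g := by
    refine isIDF_rootedProd_pathGraph_iff.2
      ⟨fun u => by simp only [g, altPattern]; split_ifs <;> omega, fun x j h0 => le_add_right ?_⟩
    have := j.2
    simp only [g, altPattern, extendByZero] at h0 ⊢
    split_ifs at h0 ⊢ <;> omega
  calc
    _ ≤ ∑ u, g u := italianNumber_le hg
    _ = _ := by
      rw [Fintype.sum_prod_type]
      simp only [g, Fin.sum_univ_eq_sum_range (altPattern t), sum_range_altPattern ht, sum_const,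
        card_univ, smul_eq_mul]

theorem isIDF_domPattern {D : Finset α} (hD : IsDomSet G D) (he : Even t) {v : Fin t}
    (hv : v.1 = 0) : IsIDF (rootedProd G (pathGraph t) v) (domPattern D t) := by
  refine isIDF_rootedProd_pathGraph_iff.2
    ⟨fun u => by simp only [domPattern, altPattern]; split_ifs <;> omega, fun x j h0 => ?_⟩
  obtain ⟨k, rfl⟩ := he
  have := j.2
  by_cases hx : x ∈ D
  · refine le_add_right ?_
    simp only [domPattern, altPattern, extendByZero, hx, if_true] at h0 ⊢
    split_ifs at h0 ⊢ <;> omega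
  by_cases hj : j.1 = 0
  · obtain ⟨y, hyD, hxy⟩ := hD x (mt mem_coe.1 hx)
    have hy : 1 ≤ ∑ y ∈ univ.filter (fun y => G.Adj x y), domPattern D (k + k) (y, v) :=
      le_trans (by simp [domPattern, altPattern, mem_coe.1 hyD, hv])
        (single_le_sum (fun _ _ => Nat.zero_le _) (mem_filter.2 ⟨mem_univ y, hxy⟩))
    have h1 : extendByZero (fun k' => domPattern D (k + k) (x, k')) (j + 1) = 1 := by
      simp only [domPattern, extendByZero, hx, if_false, hj]
      split_ifs <;> omega
    rw [if_pos (Fin.ext (hj.trans hv.symm))]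
    omega
  · refine le_add_right ?_
    simp only [domPattern, extendByZero, hx, if_false] at h0 ⊢
    split_ifs at h0 ⊢ <;> omega

theorem italianNumber_rootedProd_pathGraph_le_of_even (ht : 2 ≤ t) (he : Even t) {v : Fin t}
    (hv : v.1 = 0) :
    italianNumber (rootedProd G (pathGraph t) v) ≤
      Fintype.card α * (t / 2) + dominationNumber G := by
  obtain ⟨D, hD, hcard⟩ := exists_isDomSet_card_eq G
  calc
    _ ≤ ∑ u, domPattern D t u := italianNumber_le (isIDF_domPattern G hD he hv)
    _ = ∑ x, copyWeight (domPattern D t) x := Fintype.sum_prod_type _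
    _ = _ := by
      rw [sum_congr rfl fun x _ => copyWeight_domPattern D ht he x, sum_add_ite_mem, hcard]

theorem le_italianNumber_rootedProd_pathGraph_of_even (ht : 2 ≤ t) (he : Even t) {v : Fin t}
    (hv : v.1 = 0) :
    Fintype.card α * (t / 2) + dominationNumber G ≤
      italianNumber (rootedProd G (pathGraph t) v) := by
  refine le_italianNumber fun f hf => ?_
  obtain ⟨k, rfl⟩ := he
  let D := univ.filter fun x => k + k + 2 ≤ 2 * copyWeight f x
  have hD : IsDomSet G D := by
    intro x hx
    have hx : ¬k + k + 2 ≤ 2 * copyWeight f x := fun h =>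
      hx (mem_coe.2 (mem_filter.2 ⟨mem_univ x, h⟩))
    obtain ⟨y, hxy, hy⟩ := hf.exists_adj_of_two_mul_copyWeight_le ht hv (x := x) (by omega)
    have := hf.add_le_two_mul_copyWeight ht hv y
    exact ⟨y, mem_coe.2 (mem_filter.2 ⟨mem_univ y, by omega⟩), hxy⟩
  calc
    _ ≤ Fintype.card α * ((k + k) / 2) + #D := by
      gcongr
      exact dominationNumber_le G hD
    _ = ∑ x, ((k + k) / 2 + if x ∈ D then 1 else 0) := (sum_add_ite_mem D _).symm
    _ ≤ ∑ x, copyWeight f x := sum_le_sum fun x _ => by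
      have := hf.add_le_two_mul_copyWeight ht hv x
      split_ifs with hx
      · have := (mem_filter.1 hx).2
        omega
      · omega
    _ = ∑ u, f u := (Fintype.sum_prod_type f).symm

theorem italianNumber_rootedProd_pathGraph_of_even (ht : 2 ≤ t) (he : Even t) {v : Fin t}
    (hv : v.1 = 0) :
    italianNumber (rootedProd G (pathGraph t) v) = Fintype.card α * (t / 2) + dominationNumber G :=
  le_antisymm (italianNumber_rootedProd_pathGraph_le_of_even G ht he hv)
    (le_italianNumber_rootedProd_pathGraph_of_even G ht he hv)

theorem italianNumber_rootedProd_pathGraph_of_odd (ht : 2 ≤ t) (ho : Odd t) {v : Fin t}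
    (hv : v.1 = 0) :
    italianNumber (rootedProd G (pathGraph t) v) = Fintype.card α * ((t + 2) / 2) :=
  le_antisymm (italianNumber_rootedProd_pathGraph_le G (by omega) v)
    (card_mul_le_italianNumber fun _ hf x => by
      have := hf.add_le_two_mul_copyWeight ht hv x
      obtain ⟨k, rfl⟩ := ho
      omega)

theorem italianNumber_rootedProd_pathGraph_of_pos_of_lt {v : Fin t} (hv0 : 0 < v.1)
    (hv : v.1 + 1 < t) :
    italianNumber (rootedProd G (pathGraph t) v) = Fintype.card α * ((t + 2) / 2) :=
  le_antisymm (italianNumber_rootedProd_pathGraph_le G (by omega) v)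
    (card_mul_le_italianNumber fun _ hf x => by
      have := hf.succ_le_two_mul_copyWeight hv0 hv x
      omega)

theorem italianNumber_rootedProd_pathGraph_rev (v : Fin t) :
    italianNumber (rootedProd G (pathGraph t) v.rev) =
      italianNumber (rootedProd G (pathGraph t) v) :=
  (italianNumber_congr (rootedProdCongr G (pathGraphRevIso t) v)).symm

end Bounds

theorem stmt17_general {α : Type*} [Fintype α] (G : SimpleGraph α)
    (t : ℕ) (ht : 2 ≤ t) :
    (∀ v : Fin t, deg (SimpleGraph.pathGraph t) v = 1 →
      (Odd t → italianNumber (rootedProd G (SimpleGraph.pathGraph t) v) =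
          Fintype.card α * ((t + 2) / 2)) ∧
      (Even t → italianNumber (rootedProd G (SimpleGraph.pathGraph t) v) =
          Fintype.card α * ((t + 1) / 2) + dominationNumber G)) ∧
    (∀ v : Fin t, deg (SimpleGraph.pathGraph t) v ≠ 1 →
      italianNumber (rootedProd G (SimpleGraph.pathGraph t) v) =
        Fintype.card α * ((t + 2) / 2)) := by
  refine ⟨fun v hv => ?_, fun v hv => ?_⟩
  · obtain ⟨w, hw, hvw⟩ : ∃ w : Fin t, w.1 = 0 ∧
        italianNumber (rootedProd G (SimpleGraph.pathGraph t) v) =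
          italianNumber (rootedProd G (SimpleGraph.pathGraph t) w) := by
      rcases (deg_pathGraph_eq_one_iff ht v).1 hv with h | h
      · exact ⟨v, h, rfl⟩
      · exact ⟨v.rev, by rw [Fin.val_rev]; omega,
          (italianNumber_rootedProd_pathGraph_rev G v).symm⟩
    rw [hvw]
    refine ⟨fun ho => italianNumber_rootedProd_pathGraph_of_odd G ht ho hw, fun he => ?_⟩
    rw [italianNumber_rootedProd_pathGraph_of_even G ht he hw]
    obtain ⟨k, rfl⟩ := he
    congr 2
    omega
  · rw [Ne, deg_pathGraph_eq_one_iff ht] at hv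
    exact italianNumber_rootedProd_pathGraph_of_pos_of_lt G (by omega) (by omega)

/-- Theorem: for t ≥ 2, if v is a leaf of the path P_t then
γ_I(G∘_v P_t) = n(G)⌈(t+1)/2⌉ for odd t and γ_I(G∘_v P_t) = n(G)⌈t/2⌉ + γ(G) for
even t; if v is a non-leaf vertex of P_t then γ_I(G∘_v P_t) = n(G)⌈(t+1)/2⌉. -/
theorem stmt17 {α : Type*} [Fintype α] [Nonempty α] (G : SimpleGraph α)
    (t : ℕ) (ht : 2 ≤ t) :
    (∀ v : Fin t, deg (SimpleGraph.pathGraph t) v = 1 →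
      (Odd t → italianNumber (rootedProd G (SimpleGraph.pathGraph t) v) =
          Fintype.card α * ((t + 2) / 2)) ∧
      (Even t → italianNumber (rootedProd G (SimpleGraph.pathGraph t) v) =
          Fintype.card α * ((t + 1) / 2) + dominationNumber G)) ∧
    (∀ v : Fin t, deg (SimpleGraph.pathGraph t) v ≠ 1 →
      italianNumber (rootedProd G (SimpleGraph.pathGraph t) v) =
        Fintype.card α * ((t + 2) / 2)) :=
  stmt17_general G t ht
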